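/- arXiv:1402.5078 — 3 statements merged into one kernel-verified Lean document; each statement's English description precedes it below -/
import Mathlib

section
/- For every k ≥ 1, the Ambainis–Sun function g_0 on 2k variables satisfies C_1(g_0) = ⌊3k/2⌋ + 1: every 1-input satisfies exactly one certificate c_i, each c_i assigns exactly ⌊3k/2⌋+1 variables, and no smaller 1-certificate exists for any 1-input. -/
open Finset

section Defs

variable {I : Type*} [Fintype I] [DecidableEq I]

/-- Flip a single bit of the input. -/
def flipBit (x : I → Bool) (i : I) : I → Bool := Function.update x i (!(x i))

/-- Flip a block of bits of the input. -/
def flipSet (x : I → Bool) (B : Finset I) : I → Bool := fun j => if j ∈ B then !(x j) else x j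

/-- Sensitivity of `f` at input `x`. -/
def sens (f : (I → Bool) → Bool) (x : I → Bool) : ℕ :=
  (univ.filter fun i => f (flipBit x i) ≠ f x).card

/-- Maximum sensitivity over 0-inputs. -/
noncomputable def s0 (f : (I → Bool) → Bool) : ℕ :=
  (univ.filter fun x => f x = false).sup (sens f)

/-- Maximum sensitivity over 1-inputs. -/
noncomputable def s1 (f : (I → Bool) → Bool) : ℕ :=
  (univ.filter fun x => f x = true).sup (sens f)

/-- There exist `b` pairwise disjoint sensitive blocks for `f` at `x`. -/
def hasBS (f : (I → Bool) → Bool) (x : I → Bool) (b : ℕ) : Prop :=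
  ∃ B : Fin b → Finset I, (∀ i j, i ≠ j → Disjoint (B i) (B j)) ∧
    ∀ i, f (flipSet x (B i)) ≠ f x

/-- Block sensitivity of `f` at `x`. -/
noncomputable def bs (f : (I → Bool) → Bool) (x : I → Bool) : ℕ := sSup {b | hasBS f x b}

/-- Maximum block sensitivity over 0-inputs. -/
noncomputable def bs0 (f : (I → Bool) → Bool) : ℕ :=
  (univ.filter fun x => f x = false).sup (bs f)

/-- `y` agrees with `x` on the set `S`. -/
def agreesOn (S : Finset I) (x y : I → Bool) : Prop := ∀ i ∈ S, y i = x i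

/-- The restriction of `x` to `S` forces the value `v`. -/
def IsCertOn (f : (I → Bool) → Bool) (S : Finset I) (x : I → Bool) (v : Bool) : Prop :=
  ∀ y, agreesOn S x y → f y = v

/-- Minimum size of a certificate of `f` at `x` (for the value `f x`). -/
noncomputable def certSize (f : (I → Bool) → Bool) (x : I → Bool) : ℕ :=
  sInf {m | ∃ S : Finset I, S.card = m ∧ IsCertOn f S x (f x)}

/-- Maximum certificate complexity over 1-inputs. -/
noncomputable def C1 (f : (I → Bool) → Bool) : ℕ :=
  (univ.filter fun x => f x = true).sup (certSize f)

/-- `x` satisfies the partial assignment `c`. -/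
def PAsat (c : I → Option Bool) (x : I → Bool) : Prop := ∀ i b, c i = some b → x i = b

/-- The partial assignment `c` is a 1-certificate of `f`. -/
def IsOneCert (f : (I → Bool) → Bool) (c : I → Option Bool) : Prop :=
  ∀ x, PAsat c x → f x = true

/-- The partial assignment `c` is a minimal 1-certificate of `f`. -/
def IsMinOneCert (f : (I → Bool) → Bool) (c : I → Option Bool) : Prop :=
  IsOneCert f c ∧ ∀ i, c i ≠ none → ¬ IsOneCert f (Function.update c i none)

/-- Number of positions assigned by a partial assignment. -/
def PAsize (c : I → Option Bool) : ℕ := (univ.filter fun i => c i ≠ none).card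

/-- Two partial assignments overlap: some position is assigned the same value by both. -/
def Overlap (c d : I → Option Bool) : Prop := ∃ i b, c i = some b ∧ d i = some b

/-- Number of contradictions between two partial assignments. -/
def contra (c d : I → Option Bool) : ℕ :=
  (univ.filter fun i =>
    (c i = some true ∧ d i = some false) ∨ (c i = some false ∧ d i = some true)).card

end Defs

/-- Total weight of the induced subgraph on `A` (each unordered edge counted once). -/
def gweight {V : Type*} [DecidableEq V] (w : V → V → ℕ) (A : Finset V) : ℚ :=
  (∑ p ∈ A.offDiag, (w p.1 p.2 : ℚ)) / 2

/-- The index `j` lies in `{i+1, …, i+⌊k/2⌋}` taken modulo `k`. -/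
def ASrange (k : ℕ) (i j : Fin k) : Prop :=
  (j : ℕ) ∈ (Finset.Icc 1 (k / 2)).image (fun d => ((i : ℕ) + d) % k)

instance (k : ℕ) (i j : Fin k) : Decidable (ASrange k i j) := by
  unfold ASrange; infer_instance

/-- The Ambainis–Sun certificate `c_i` on variables indexed by `Fin k × Fin 2`,
where `(j, 0)` stands for `x_{2j+1}` and `(j, 1)` stands for `x_{2j+2}`:
it requires `x_{2i+1} = x_{2i+2} = 1`, `x_{2j+1} = 0` for `j ≠ i`, and
`x_{2j+2} = 0` for `j ∈ {i+1, …, i+⌊k/2⌋}` (mod `k`). -/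
def ASCert (k : ℕ) (i : Fin k) (p : Fin k × Fin 2) : Option Bool :=
  if p.2 = 0 then (if p.1 = i then some true else some false)
  else if p.1 = i then some true
  else if ASrange k i p.1 then some false
  else none

instance {I : Type*} [Fintype I] [DecidableEq I] (c : I → Option Bool) (x : I → Bool) :
    Decidable (PAsat c x) := by
  unfold PAsat; infer_instance

/-- The Ambainis–Sun function on `2k` variables: `1` iff the input satisfies some `c_i`. -/
def ASfun (k : ℕ) (x : Fin k × Fin 2 → Bool) : Bool :=
  decide (∃ i : Fin k, PAsat (ASCert k i) x)

/-
Upper bound: a 1-input satisfies some `c_i`, and the support of `c_i`, of size ⌊3k/2⌋ + 1,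
is a certificate. Lower bound: the input with ones exactly at `x_{2i+1}` and `x_{2i+2}`
satisfies `c_i`, and flipping any variable fixed by `c_i` makes the function `0`; every
certificate must contain all such sensitive variables.
-/

section Certificates

variable {I : Type*}

def PAsupp [Fintype I] (c : I → Option Bool) : Finset I := univ.filter fun i => c i ≠ none

@[simp]
theorem mem_PAsupp [Fintype I] {c : I → Option Bool} {i : I} : i ∈ PAsupp c ↔ c i ≠ none :=
  mem_filter_univ i

theorem isCertOn_univ [Fintype I] (f : (I → Bool) → Bool) (x : I → Bool) :
    IsCertOn f univ x (f x) :=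
  fun _ hy => congrArg f (funext fun i => hy i (mem_univ i))

theorem certSize_le_card {f : (I → Bool) → Bool} {S : Finset I} {x : I → Bool}
    (hS : IsCertOn f S x (f x)) : certSize f x ≤ S.card :=
  Nat.sInf_le ⟨S, rfl, hS⟩

theorem IsCertOn.mem_of_sensitive [DecidableEq I] {f : (I → Bool) → Bool} {S : Finset I}
    {x : I → Bool} {v : Bool} (hS : IsCertOn f S x v) {p : I} (hp : f (flipBit x p) ≠ v) :
    p ∈ S := by
  by_contra hpS
  refine hp (hS _ fun q hq => ?_)
  rw [flipBit, Function.update_of_ne (ne_of_mem_of_not_mem hq hpS)]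

theorem card_le_certSize [Fintype I] [DecidableEq I] {f : (I → Bool) → Bool} {x : I → Bool}
    {T : Finset I} (hT : ∀ p ∈ T, f (flipBit x p) ≠ f x) : T.card ≤ certSize f x := by
  obtain ⟨S, hcard, hS⟩ : sInf {m | ∃ S : Finset I, S.card = m ∧ IsCertOn f S x (f x)} ∈
      {m | ∃ S : Finset I, S.card = m ∧ IsCertOn f S x (f x)} :=
    Nat.sInf_mem ⟨_, univ, rfl, isCertOn_univ f x⟩
  rw [certSize, ← hcard]
  exact card_le_card fun p hp => hS.mem_of_sensitive (hT p hp)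

theorem IsOneCert.isCertOn [Fintype I] {f : (I → Bool) → Bool} {c : I → Option Bool}
    (hc : IsOneCert f c) {x : I → Bool} (hx : PAsat c x) : IsCertOn f (PAsupp c) x true :=
  fun y hy => hc y fun i b hi => by
    rw [hy i (by simp [hi])]
    exact hx i b hi

theorem IsOneCert.certSize_le [Fintype I] {f : (I → Bool) → Bool} {c : I → Option Bool}
    (hc : IsOneCert f c) {x : I → Bool} (hx : PAsat c x) : certSize f x ≤ PAsize c := by
  apply certSize_le_card
  rw [hc x hx]
  exact hc.isCertOn hx

end Certificates

section AmbainisSun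

variable {k : ℕ}

theorem eq_of_add_mod_eq_of_lt {a d₁ d₂ : ℕ} (h₁ : d₁ < k) (h₂ : d₂ < k)
    (h : (a + d₁) % k = (a + d₂) % k) : d₁ = d₂ :=
  (Nat.ModEq.add_left_cancel' a h).eq_of_lt_of_lt h₁ h₂

theorem ASrange.ne {i j : Fin k} (h : ASrange k i j) : j ≠ i := by
  obtain ⟨d, hd, hdj⟩ := mem_image.mp h
  rintro rfl
  have hd0 : d = 0 :=
    eq_of_add_mod_eq_of_lt (by have := Nat.div_le_self k 2; simp only [mem_Icc] at hd; omega) j.pos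
      (by rw [hdj, add_zero, Nat.mod_eq_of_lt j.isLt])
  simp [hd0] at hd

theorem card_filter_ASrange (i : Fin k) : #{j | ASrange k i j} = k / 2 := by
  have hlt : ∀ m ∈ (Icc 1 (k / 2)).image (fun d => ((i : ℕ) + d) % k), m < k := by
    intro m hm
    obtain ⟨d, _, rfl⟩ := mem_image.mp hm
    exact Nat.mod_lt _ i.pos
  have hset : ({j | ASrange k i j} : Finset (Fin k)) =
      ((Icc 1 (k / 2)).image (fun d => ((i : ℕ) + d) % k)).attachFin hlt := by
    ext j
    rw [mem_filter_univ, mem_attachFin]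
    rfl
  rw [hset, card_attachFin, card_image_of_injOn, Nat.card_Icc, Nat.add_sub_cancel]
  intro d₁ h₁ d₂ h₂ h
  simp only [coe_Icc, Set.mem_Icc] at h₁ h₂
  have := Nat.div_lt_self i.pos one_lt_two
  exact eq_of_add_mod_eq_of_lt (by omega) (by omega) h

theorem PAsupp_ASCert (i : Fin k) :
    PAsupp (ASCert k i) =
      (univ : Finset (Fin k)) ×ˢ {0} ∪ insert i ({j | ASrange k i j} : Finset (Fin k)) ×ˢ {1} := by
  ext ⟨j, b⟩
  fin_cases b <;> by_cases hj : j = i <;> simp [ASCert, hj]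

theorem PAsize_ASCert (i : Fin k) : PAsize (ASCert k i) = 3 * k / 2 + 1 := by
  rw [PAsize, ← PAsupp, PAsupp_ASCert,
    card_union_of_disjoint (disjoint_product.mpr (Or.inr (by decide))), card_product,
    card_product, card_insert_of_notMem (by simpa using (·.ne rfl)), card_filter_ASrange]
  simp only [card_univ, Fintype.card_fin, card_singleton]
  omega

theorem isOneCert_ASCert (i : Fin k) : IsOneCert (ASfun k) (ASCert k i) :=
  fun _ hx => decide_eq_true ⟨i, hx⟩

theorem ASfun_eq_true_iff {x : Fin k × Fin 2 → Bool} :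
    ASfun k x = true ↔ ∃ i, PAsat (ASCert k i) x :=
  decide_eq_true_iff

theorem PAsat.ASCert_apply_zero {i : Fin k} {y : Fin k × Fin 2 → Bool}
    (hy : PAsat (ASCert k i) y) (j : Fin k) : y (j, 0) = decide (j = i) := by
  by_cases hj : j = i
  · simpa [hj] using hy (j, 0) true (by simp [ASCert, hj])
  · simpa [hj] using hy (j, 0) false (by simp [ASCert, hj])

def ASinput (k : ℕ) (i : Fin k) (q : Fin k × Fin 2) : Bool := decide (q.1 = i)

theorem PAsat_ASCert_ASinput (i : Fin k) : PAsat (ASCert k i) (ASinput k i) := by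
  rintro ⟨j, b⟩ v hv
  fin_cases b <;> by_cases hj : j = i <;> simp only [ASCert, ASinput, hj] at hv ⊢ <;>
    split_ifs at hv <;> simp_all

theorem ASfun_flipBit_ASinput {i : Fin k} {p : Fin k × Fin 2}
    (hp : p ∈ PAsupp (ASCert k i)) : ASfun k (flipBit (ASinput k i) p) = false := by
  rw [Bool.eq_false_iff, ne_eq, ASfun_eq_true_iff]
  rintro ⟨j, hj⟩
  obtain ⟨l, b⟩ := p
  have hzero := hj.ASCert_apply_zero
  fin_cases b
  · -- flipping an odd variable leaves zero or two ones among the odd variables; `c_j` wants one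
    have hi := hzero i
    have hl := hzero l
    have hjj := hzero j
    simp only [flipBit, Function.update_apply, ASinput, Prod.mk.injEq] at hi hl hjj
    grind
  · -- flipping an even variable keeps the odd ones, so `j = i`, but `c_i` fixes the flipped bit
    have hji : j = i := by simpa [flipBit, ASinput, eq_comm] using hzero i
    subst hji
    by_cases hl : l = j
    · simpa [flipBit, ASinput, hl] using hj (l, 1) true (by simp [ASCert, hl])
    · have hr : ASrange k j l := by
        by_contra hr
        simp [ASCert, hl, hr] at hp
      simpa [flipBit, ASinput, hl] using hj (l, 1) false (by simp [ASCert, hl, hr])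

theorem ASfun_ASinput (i : Fin k) : ASfun k (ASinput k i) = true :=
  isOneCert_ASCert i _ (PAsat_ASCert_ASinput i)

theorem certSize_ASfun_ASinput (i : Fin k) :
    certSize (ASfun k) (ASinput k i) = 3 * k / 2 + 1 := by
  rw [← PAsize_ASCert i]
  refine le_antisymm ((isOneCert_ASCert i).certSize_le (PAsat_ASCert_ASinput i)) ?_
  exact card_le_certSize fun p hp => by rw [ASfun_ASinput, ASfun_flipBit_ASinput hp]; simp

end AmbainisSun

/-- For every `k ≥ 1`, the Ambainis–Sun function satisfies
`C_1(g_0) = ⌊3k/2⌋ + 1`. -/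
theorem stmt_5 (k : ℕ) (hk : 1 ≤ k) : C1 (ASfun k) = 3 * k / 2 + 1 := by
  apply le_antisymm
  · refine Finset.sup_le fun x hx => ?_
    obtain ⟨i, hi⟩ := ASfun_eq_true_iff.mp (mem_filter.mp hx).2
    exact PAsize_ASCert i ▸ (isOneCert_ASCert i).certSize_le hi
  · rw [← certSize_ASfun_ASinput ⟨0, hk⟩]
    exact Finset.le_sup (mem_filter.mpr ⟨mem_univ _, ASfun_ASinput _⟩)
end

section
/- For all m ≥ 1 and k divisible by m, there exists a Boolean function g with s_0(g)=m, bs_0(g)=k, and C_1(g) = ⌊3(k/m)/2⌋ + 1. -/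
open Finset

section Construction

/-- cyclic gap from i to j -/
def dgap (r : ℕ) (i j : Fin r) : ℕ :=
  if i.val ≤ j.val then j.val - i.val else j.val + r - i.val

def arrowP (r : ℕ) (i j : Fin r) : Prop := 1 ≤ dgap r i j ∧ dgap r i j ≤ r / 2

instance (r : ℕ) (i j : Fin r) : Decidable (arrowP r i j) := by
  unfold arrowP; infer_instance

lemma arrow_total (r : ℕ) (i j : Fin r) (hij : i ≠ j) : arrowP r i j ∨ arrowP r j i := by
  have hi := i.isLt; have hj := j.isLt
  have hne : i.val ≠ j.val := fun h => hij (Fin.ext h)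
  unfold arrowP dgap
  rcases le_or_gt i.val j.val with h | h <;> rcases le_or_gt j.val i.val with h' | h' <;>
    simp only [if_pos, if_neg, h, h', not_le] <;> omega

lemma arrow_ne (r : ℕ) (i j : Fin r) (h : arrowP r i j) : j ≠ i := by
  rintro rfl
  have h0 : dgap r j j = 0 := by unfold dgap; simp
  have := h.1
  omega

lemma arrow_card (r : ℕ) (hr : 0 < r) (i : Fin r) :
    (univ.filter fun j => arrowP r i j).card = r / 2 := by
  have hhalf : r / 2 < r := Nat.div_lt_self hr one_lt_two
  rw [show r / 2 = (Finset.Icc 1 (r/2)).card by rw [Nat.card_Icc]; omega]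
  apply Finset.card_bij (fun j _ => dgap r i j)
  · intro j hj
    simp only [mem_filter] at hj
    exact Finset.mem_Icc.mpr ⟨hj.2.1, hj.2.2⟩
  · intro a ha b hb hab
    simp only [mem_filter] at ha hb
    have ha' := a.isLt; have hb' := b.isLt; have hi := i.isLt
    apply Fin.ext
    unfold dgap at hab
    rcases le_or_gt i.val a.val with h | h <;> rcases le_or_gt i.val b.val with h' | h' <;>
      simp only [if_pos, if_neg, h, h', not_le] at hab <;> omega
  · intro d hd
    simp only [Finset.mem_Icc] at hd
    have hi := i.isLt
    by_cases hc : i.val + d < r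
    · refine ⟨⟨i.val + d, hc⟩, ?_, ?_⟩
      · simp only [mem_filter, mem_univ, true_and]
        unfold arrowP dgap
        simp only [show ((⟨i.val + d, hc⟩ : Fin r) : ℕ) = i.val + d from rfl]
        rw [if_pos (by omega)]
        omega
      · unfold dgap
        simp only [show ((⟨i.val + d, hc⟩ : Fin r) : ℕ) = i.val + d from rfl]
        rw [if_pos (by omega)]
        omega
    · refine ⟨⟨i.val + d - r, by omega⟩, ?_, ?_⟩
      · simp only [mem_filter, mem_univ, true_and]
        unfold arrowP dgap
        simp only [show ((⟨i.val + d - r, by omega⟩ : Fin r) : ℕ) = i.val + d - r from rfl]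
        rw [if_neg (by omega)]
        omega
      · unfold dgap
        simp only [show ((⟨i.val + d - r, by omega⟩ : Fin r) : ℕ) = i.val + d - r from rfl]
        rw [if_neg (by omega)]
        omega

end Construction

section Construction2
variable (m r : ℕ)

abbrev CoordT (m r : ℕ) := Fin m × Fin r × Fin 2

/-- the partial assignment describing cube `q` -/
def cubePA (q : Fin m × Fin r) (p : CoordT m r) : Option Bool :=
  if p.1 = q.1 then
    if p.2.2 = (0 : Fin 2) then some (decide (p.2.1 = q.2))
    else if p.2.1 = q.2 then some true
    else if arrowP r q.2 p.2.1 then some false else none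
  else none

def SatC (q : Fin m × Fin r) (x : CoordT m r → Bool) : Prop :=
  ∀ p b, cubePA m r q p = some b → x p = b

instance (q : Fin m × Fin r) (x : CoordT m r → Bool) : Decidable (SatC m r q x) := by
  unfold SatC; infer_instance

/-- the base function -/
def gfun (x : CoordT m r → Bool) : Bool := decide (∃ q : Fin m × Fin r, SatC m r q x)

lemma gfun_true_iff (x : CoordT m r → Bool) :
    gfun m r x = true ↔ ∃ q, SatC m r q x := by
  unfold gfun; simp

lemma gfun_false_iff (x : CoordT m r → Bool) :
    gfun m r x = false ↔ ∀ q, ¬ SatC m r q x := by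
  unfold gfun; simp

lemma cubePA_copy (q : Fin m × Fin r) (p : CoordT m r) (h : cubePA m r q p ≠ none) :
    p.1 = q.1 := by
  by_contra hne
  exact h (by unfold cubePA; rw [if_neg hne])

lemma cubePA_bit0 (u : Fin m) (i j : Fin r) :
    cubePA m r (u, i) (u, j, 0) = some (decide (j = i)) := by
  unfold cubePA; simp

lemma cubePA_bit1_self (u : Fin m) (i : Fin r) :
    cubePA m r (u, i) (u, i, 1) = some true := by
  unfold cubePA; simp

lemma cubePA_bit1_arrow (u : Fin m) (i j : Fin r) (hne : j ≠ i) (h : arrowP r i j) :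
    cubePA m r (u, i) (u, j, 1) = some false := by
  unfold cubePA
  simp [hne, h, Fin.ext_iff]

end Construction2

section Construction3
variable {m r : ℕ}

lemma flipBit_eq_flipSet {I : Type*} [Fintype I] [DecidableEq I] (x : I → Bool) (p : I) :
    flipBit x p = flipSet x {p} := by
  funext q
  unfold flipBit flipSet Function.update
  by_cases h : q = p <;> simp [h]

lemma flipSet_empty {I : Type*} [Fintype I] [DecidableEq I] (x : I → Bool) :
    flipSet x (∅ : Finset I) = x := by
  funext q; unfold flipSet; simp

/-- Lemma A: if two disjoint flips of `x` both satisfy cube `q`, so does `x`. -/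
lemma satC_of_two_flips (q : Fin m × Fin r) (x : CoordT m r → Bool)
    (B1 B2 : Finset (CoordT m r)) (hd : Disjoint B1 B2)
    (h1 : SatC m r q (flipSet x B1)) (h2 : SatC m r q (flipSet x B2)) :
    SatC m r q x := by
  intro p b hp
  by_cases hB : p ∈ B1
  · have h := h2 p b hp
    unfold flipSet at h
    rwa [if_neg (Finset.disjoint_left.mp hd hB)] at h
  · have h := h1 p b hp
    unfold flipSet at h
    rwa [if_neg hB] at h

/-- three coordinates on which two cubes of the same copy disagree -/
lemma three_disag (u : Fin m) (i j : Fin r) (hij : i ≠ j) :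
    ∃ w1 w2 w3 : CoordT m r, w1 ≠ w2 ∧ w1 ≠ w3 ∧ w2 ≠ w3 ∧
      (∀ w ∈ ({w1, w2, w3} : Finset (CoordT m r)), ∃ a b : Bool, a ≠ b ∧
        cubePA m r (u, i) w = some a ∧ cubePA m r (u, j) w = some b) := by
  have d1 : ∃ a b : Bool, a ≠ b ∧ cubePA m r (u, i) (u, i, 0) = some a ∧
      cubePA m r (u, j) (u, i, 0) = some b := by
    refine ⟨true, false, by simp, ?_, ?_⟩
    · rw [cubePA_bit0]; simp
    · rw [cubePA_bit0]; simp [hij]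
  have d2 : ∃ a b : Bool, a ≠ b ∧ cubePA m r (u, i) (u, j, 0) = some a ∧
      cubePA m r (u, j) (u, j, 0) = some b := by
    refine ⟨false, true, by simp, ?_, ?_⟩
    · rw [cubePA_bit0]; simp [Ne.symm hij]
    · rw [cubePA_bit0]; simp
  rcases arrow_total r i j hij with h | h
  · refine ⟨(u, i, 0), (u, j, 0), (u, j, 1), by simp [hij], by simp, by simp, ?_⟩
    intro w hw
    simp only [Finset.mem_insert, Finset.mem_singleton] at hw
    rcases hw with rfl | rfl | rfl
    · exact d1
    · exact d2
    · exact ⟨false, true, by simp, cubePA_bit1_arrow m r u i j (Ne.symm hij) h,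
        cubePA_bit1_self m r u j⟩
  · refine ⟨(u, i, 0), (u, j, 0), (u, i, 1), by simp [hij], by simp, by simp, ?_⟩
    intro w hw
    simp only [Finset.mem_insert, Finset.mem_singleton] at hw
    rcases hw with rfl | rfl | rfl
    · exact d1
    · exact d2
    · exact ⟨true, false, by simp, cubePA_bit1_self m r u i,
        cubePA_bit1_arrow m r u j i hij h⟩

/-- Lemma B: two small flips of `x` cannot satisfy two different cubes of the same copy. -/
lemma not_two_cubes (u : Fin m) (i j : Fin r) (hij : i ≠ j) (x : CoordT m r → Bool)
    (B1 B2 : Finset (CoordT m r))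
    (h1 : SatC m r (u, i) (flipSet x B1)) (h2 : SatC m r (u, j) (flipSet x B2))
    (hc : B1.card + B2.card ≤ 2) : False := by
  obtain ⟨w1, w2, w3, h12, h13, h23, hD⟩ := three_disag u i j hij
  have key : ∀ w ∈ ({w1, w2, w3} : Finset (CoordT m r)), w ∈ B1 ∪ B2 := by
    intro w hw
    obtain ⟨a, b, hab, hai, haj⟩ := hD w hw
    by_contra hmem
    simp only [Finset.mem_union, not_or] at hmem
    have e1 := h1 w a hai
    have e2 := h2 w b haj
    unfold flipSet at e1 e2
    rw [if_neg hmem.1] at e1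
    rw [if_neg hmem.2] at e2
    exact hab (e1 ▸ e2 ▸ rfl)
  have hcard : ({w1, w2, w3} : Finset (CoordT m r)).card = 3 := by
    rw [Finset.card_insert_of_notMem (by simp [h12, h13]),
      Finset.card_insert_of_notMem (by simp [h23]), Finset.card_singleton]
  have h3 : 3 ≤ (B1 ∪ B2).card := hcard ▸ Finset.card_le_card key
  have := Finset.card_union_le B1 B2
  omega

end Construction3

section Construction4
variable {m r : ℕ}

lemma satC_iff (u : Fin m) (i : Fin r) (x : CoordT m r → Bool) :
    SatC m r (u, i) x ↔ ((∀ j, x (u, j, 0) = decide (j = i)) ∧ x (u, i, 1) = true ∧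
      ∀ j, j ≠ i → arrowP r i j → x (u, j, 1) = false) := by
  constructor
  · intro h
    refine ⟨fun j => h _ _ (cubePA_bit0 m r u i j), h _ _ (cubePA_bit1_self m r u i),
      fun j hj ha => h _ _ (cubePA_bit1_arrow m r u i j hj ha)⟩
  · rintro ⟨h0, h1, h2⟩ ⟨v, j, b2⟩ b hp
    have hcopy : v = u := cubePA_copy m r (u, i) (v, j, b2) (by rw [hp]; simp)
    subst hcopy
    fin_cases b2
    · have hp' : cubePA m r (v, i) (v, j, 0) = some b := hp
      show x (v, j, 0) = b
      rw [cubePA_bit0] at hp'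
      rw [h0 j]
      exact Option.some.inj hp'
    · by_cases hj : j = i
      · subst hj
        have hp' : cubePA m r (v, j) (v, j, 1) = some b := hp
        rw [cubePA_bit1_self] at hp'
        show x (v, j, 1) = b
        rw [h1]
        exact Option.some.inj hp'
      · by_cases ha : arrowP r i j
        · have hp' : cubePA m r (v, i) (v, j, 1) = some b := hp
          rw [cubePA_bit1_arrow m r v i j hj ha] at hp'
          show x (v, j, 1) = b
          rw [h2 j hj ha]
          exact Option.some.inj hp'
        · exfalso
          have hp' : cubePA m r (v, i) (v, j, 1) = some b := hp
          unfold cubePA at hp'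
          simp [hj, ha, Fin.ext_iff] at hp'

/-- the canonical point of a cube satisfies the cube -/
lemma satC_pt (q : Fin m × Fin r) :
    SatC m r q (fun p => decide (cubePA m r q p = some true)) := by
  intro p b hp
  cases b
  · simp only [decide_eq_false_iff_not]
    rw [hp]; simp
  · simp only [decide_eq_true_eq]
    exact hp

lemma satC_implies_gfun (q : Fin m × Fin r) (x : CoordT m r → Bool) (h : SatC m r q x) :
    gfun m r x = true := (gfun_true_iff m r x).mpr ⟨q, h⟩

def allFalse (m r : ℕ) : CoordT m r → Bool := fun _ => false

lemma gfun_allFalse : gfun m r (allFalse m r) = false := by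
  rw [gfun_false_iff]
  rintro ⟨u, i⟩ h
  have := ((satC_iff u i _).mp h).2.1
  simp [allFalse] at this

def blockOf (m r : ℕ) (q : Fin m × Fin r) : Finset (CoordT m r) :=
  {(q.1, q.2, 0), (q.1, q.2, 1)}

lemma mem_blockOf (q : Fin m × Fin r) (p : CoordT m r) :
    p ∈ blockOf m r q ↔ p.1 = q.1 ∧ p.2.1 = q.2 ∧ (p.2.2 = 0 ∨ p.2.2 = 1) := by
  obtain ⟨v, j, b⟩ := p
  unfold blockOf
  simp only [Finset.mem_insert, Finset.mem_singleton, Prod.mk.injEq]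
  constructor
  · rintro (⟨h1, h2, h3⟩ | ⟨h1, h2, h3⟩) <;> exact ⟨h1, h2, by tauto⟩
  · rintro ⟨h1, h2, h3 | h3⟩ <;> [left; right] <;> exact ⟨h1, h2, h3⟩

lemma blockOf_disjoint (q q' : Fin m × Fin r) (h : q ≠ q') :
    Disjoint (blockOf m r q) (blockOf m r q') := by
  rw [Finset.disjoint_left]
  intro p hp hp'
  rw [mem_blockOf] at hp hp'
  exact h (Prod.ext (hp.1 ▸ hp'.1) (hp.2.1 ▸ hp'.2.1))

lemma satC_blockFlip (u : Fin m) (i : Fin r) :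
    SatC m r (u, i) (flipSet (allFalse m r) (blockOf m r (u, i))) := by
  rw [satC_iff]
  have hval : ∀ p, flipSet (allFalse m r) (blockOf m r (u, i)) p
      = decide (p ∈ blockOf m r (u, i)) := by
    intro p
    unfold flipSet allFalse
    by_cases h : p ∈ blockOf m r (u, i) <;> simp [h]
  refine ⟨fun j => ?_, ?_, fun j hj _ => ?_⟩ <;> rw [hval]
  · simp [mem_blockOf]
  · simp [mem_blockOf]
  · simp [mem_blockOf, hj]

end Construction4

section Construction5
variable {m r : ℕ}

lemma fin2_cases (b : Fin 2) : b = 0 ∨ b = 1 := by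
  match b with
  | 0 => exact Or.inl rfl
  | 1 => exact Or.inr rfl

lemma cubePA_ne_none_iff (u : Fin m) (i : Fin r) (v : Fin m) (j : Fin r) (b : Fin 2) :
    cubePA m r (u, i) (v, j, b) ≠ none ↔ v = u ∧ (b = 0 ∨ j = i ∨ arrowP r i j) := by
  unfold cubePA
  split_ifs with h1 h2 h3 h4 <;> simp_all

def fixedS (m r : ℕ) (q : Fin m × Fin r) : Finset (CoordT m r) :=
  univ.filter fun p => cubePA m r q p ≠ none

lemma fixedS_card (hr : 0 < r) (u : Fin m) (i : Fin r) :
    (fixedS m r (u, i)).card = r + 1 + r / 2 := by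
  have hrw : fixedS m r (u, i) =
      ((univ : Finset (Fin r)).image fun j => (u, j, (0 : Fin 2))) ∪
      ((insert i (univ.filter fun j => arrowP r i j)).image fun j => (u, j, (1 : Fin 2))) := by
    ext ⟨v, j, b⟩
    simp only [fixedS, Finset.mem_filter, Finset.mem_univ, true_and, cubePA_ne_none_iff,
      Finset.mem_union, Finset.mem_image, Finset.mem_insert, Prod.mk.injEq]
    have h10 : (1 : Fin 2) ≠ 0 := by decide
    rcases fin2_cases b with rfl | rfl
    · constructor
      · rintro ⟨rfl, -⟩
        exact Or.inl ⟨j, rfl, rfl, rfl⟩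
      · rintro (⟨j', rfl, rfl, -⟩ | ⟨j', -, -, -, h⟩)
        · exact ⟨rfl, Or.inl rfl⟩
        · exact absurd h h10
    · constructor
      · rintro ⟨rfl, h | hj | ha⟩
        · exact absurd h h10
        · exact Or.inr ⟨j, Or.inl hj, rfl, rfl, rfl⟩
        · exact Or.inr ⟨j, Or.inr ha, rfl, rfl, rfl⟩
      · rintro (⟨j', -, -, h⟩ | ⟨j', hj', rfl, rfl, -⟩)
        · exact absurd h.symm h10
        · refine ⟨rfl, ?_⟩
          rcases hj' with rfl | hmem
          · exact Or.inr (Or.inl rfl)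
          · exact Or.inr (Or.inr hmem)
  have hinj0 : Function.Injective (fun j : Fin r => (u, j, (0 : Fin 2))) := by
    intro a b h; simpa [Prod.ext_iff] using h
  have hinj1 : Function.Injective (fun j : Fin r => (u, j, (1 : Fin 2))) := by
    intro a b h; simpa [Prod.ext_iff] using h
  have hdisj : Disjoint ((univ : Finset (Fin r)).image fun j => (u, j, (0 : Fin 2)))
      ((insert i (univ.filter fun j => arrowP r i j)).image fun j => (u, j, (1 : Fin 2))) := by
    rw [Finset.disjoint_left]
    rintro p hp hp'
    simp only [Finset.mem_image] at hp hp'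
    obtain ⟨a, _, rfl⟩ := hp
    obtain ⟨c, _, hc⟩ := hp'
    simp [Prod.ext_iff] at hc
  have hnotmem : i ∉ univ.filter fun j => arrowP r i j := by
    rw [Finset.mem_filter]
    rintro ⟨-, h⟩
    exact arrow_ne r i i h rfl
  rw [hrw, Finset.card_union_of_disjoint hdisj, Finset.card_image_of_injective _ hinj0,
    Finset.card_image_of_injective _ hinj1, Finset.card_insert_of_notMem hnotmem,
    arrow_card r hr i, Finset.card_univ, Fintype.card_fin]
  ring

lemma isCertOn_fixedS (q : Fin m × Fin r) (x : CoordT m r → Bool) (h : SatC m r q x) :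
    IsCertOn (gfun m r) (fixedS m r q) x true := by
  intro y hy
  apply satC_implies_gfun q
  intro p b hp
  rw [hy p (Finset.mem_filter.mpr ⟨mem_univ _, by rw [hp]; simp⟩)]
  exact h p b hp

end Construction5

section Construction6
variable {m r : ℕ}

lemma exists_cube_of_sensitive (x : CoordT m r → Bool) (hx : gfun m r x = false)
    (p : CoordT m r) (hp : gfun m r (flipBit x p) ≠ gfun m r x) :
    ∃ q, SatC m r q (flipBit x p) := by
  rw [hx] at hp
  have ht : gfun m r (flipBit x p) = true := by
    cases hgf : gfun m r (flipBit x p)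
    · exact absurd hgf hp
    · rfl
  exact (gfun_true_iff m r _).mp ht

lemma sens_le (hm : 0 < m) (x : CoordT m r → Bool) (hx : gfun m r x = false) :
    sens (gfun m r) x ≤ m := by
  classical
  unfold sens
  have hcard : (univ.filter fun p => gfun m r (flipBit x p) ≠ gfun m r x).card ≤
      (univ : Finset (Fin m)).card := by
    apply Finset.card_le_card_of_injOn
      (fun p => if h : ∃ q, SatC m r q (flipBit x p) then h.choose.1 else ⟨0, hm⟩)
    · intro a _; exact mem_univ _
    · intro p1 h1 p2 h2 heq
      by_contra hne
      have e1 : ∃ q, SatC m r q (flipBit x p1) :=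
        exists_cube_of_sensitive x hx p1 (Finset.mem_filter.mp (Finset.mem_coe.mp h1)).2
      have e2 : ∃ q, SatC m r q (flipBit x p2) :=
        exists_cube_of_sensitive x hx p2 (Finset.mem_filter.mp (Finset.mem_coe.mp h2)).2
      simp only at heq
      rw [dif_pos e1, dif_pos e2] at heq
      have q1spec := e1.choose_spec
      have q2spec := e2.choose_spec
      set q1 := e1.choose with hq1
      set q2 := e2.choose with hq2
      rw [flipBit_eq_flipSet] at q1spec q2spec
      by_cases hq : q1.2 = q2.2
      · have hqq : q1 = q2 := Prod.ext heq hq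
        have hsx : SatC m r q1 x :=
          satC_of_two_flips q1 x {p1} {p2} (by simp only [Finset.disjoint_singleton]; exact hne) q1spec (hqq ▸ q2spec)
        have := satC_implies_gfun q1 x hsx
        rw [hx] at this
        exact Bool.false_ne_true this
      · apply not_two_cubes q1.1 q1.2 q2.2 hq x {p1} {p2} ?_ ?_ (by simp)
        · rw [Prod.mk.eta]; exact q1spec
        · rw [heq, Prod.mk.eta]; exact q2spec
  calc (univ.filter fun p => gfun m r (flipBit x p) ≠ gfun m r x).card
      ≤ (univ : Finset (Fin m)).card := hcard
    _ = m := by rw [Finset.card_univ, Fintype.card_fin]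

/-- the 0-input witnessing high sensitivity -/
def xsens (m r : ℕ) (hr : 0 < r) : CoordT m r → Bool :=
  fun p => decide (p.2.1 = (⟨0, hr⟩ : Fin r) ∧ p.2.2 = 0)

lemma gfun_xsens (hr : 0 < r) : gfun m r (xsens m r hr) = false := by
  rw [gfun_false_iff]
  rintro ⟨u, i⟩ h
  have := ((satC_iff u i _).mp h).2.1
  simp [xsens] at this

lemma flip_xsens_sat (hr : 0 < r) (u : Fin m) :
    SatC m r (u, ⟨0, hr⟩) (flipBit (xsens m r hr) (u, ⟨0, hr⟩, 1)) := by
  rw [satC_iff]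
  refine ⟨fun j => ?_, ?_, fun j hj ha => ?_⟩
  · have hne : (u, j, (0 : Fin 2)) ≠ (u, (⟨0, hr⟩ : Fin r), (1 : Fin 2)) := by
      simp [Prod.ext_iff]
    unfold flipBit
    rw [Function.update_of_ne hne]
    simp [xsens]
  · unfold flipBit
    rw [Function.update_self]
    simp [xsens]
  · have hne : (u, j, (1 : Fin 2)) ≠ (u, (⟨0, hr⟩ : Fin r), (1 : Fin 2)) := by
      simp [Prod.ext_iff, hj]
    unfold flipBit
    rw [Function.update_of_ne hne]
    simp [xsens]

lemma sens_xsens_ge (hr : 0 < r) : m ≤ sens (gfun m r) (xsens m r hr) := by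
  unfold sens
  have hsub : (univ : Finset (Fin m)).image (fun u => ((u, ⟨0, hr⟩, 1) : CoordT m r)) ⊆
      univ.filter fun p => gfun m r (flipBit (xsens m r hr) p) ≠ gfun m r (xsens m r hr) := by
    intro p hp
    simp only [Finset.mem_image] at hp
    obtain ⟨u, -, rfl⟩ := hp
    rw [Finset.mem_filter]
    refine ⟨mem_univ _, ?_⟩
    rw [gfun_xsens hr, satC_implies_gfun _ _ (flip_xsens_sat hr u)]
    simp
  have hinj : Function.Injective (fun u : Fin m => ((u, ⟨0, hr⟩, 1) : CoordT m r)) := by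
    intro a b h; simpa [Prod.ext_iff] using h
  calc m = ((univ : Finset (Fin m)).image fun u => ((u, ⟨0, hr⟩, 1) : CoordT m r)).card := by
        rw [Finset.card_image_of_injective _ hinj, Finset.card_univ, Fintype.card_fin]
    _ ≤ _ := Finset.card_le_card hsub

end Construction6

section Construction7
variable {m r : ℕ}

lemma hasBS_zero {I : Type*} [Fintype I] [DecidableEq I] (f : (I → Bool) → Bool) (x : I → Bool) :
    hasBS f x 0 :=
  ⟨fun l => l.elim0, fun l => l.elim0, fun l => l.elim0⟩

lemma hasBS_le (x : CoordT m r → Bool) (hx : gfun m r x = false) (b : ℕ)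
    (h : hasBS (gfun m r) x b) : b ≤ m * r := by
  classical
  obtain ⟨B, hdisj, hsens⟩ := h
  have hex : ∀ l : Fin b, ∃ q, SatC m r q (flipSet x (B l)) := by
    intro l
    have hl := hsens l
    rw [hx] at hl
    cases hgf : gfun m r (flipSet x (B l))
    · exact absurd hgf hl
    · exact (gfun_true_iff m r _).mp hgf
  choose F hF using hex
  have hinj : Function.Injective F := by
    intro l l' hEq
    by_contra hne
    have hs := satC_of_two_flips (F l) x (B l) (B l') (hdisj l l' hne) (hF l) (hEq ▸ hF l')
    have := satC_implies_gfun _ _ hs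
    rw [hx] at this
    exact Bool.false_ne_true this
  have := Fintype.card_le_of_injective F hinj
  simpa using this

lemma hasBS_allFalse : hasBS (gfun m r) (allFalse m r) (m * r) := by
  refine ⟨fun l => blockOf m r (finProdFinEquiv.symm l), fun l l' hne => ?_, fun l => ?_⟩
  · exact blockOf_disjoint _ _ (fun h => hne (finProdFinEquiv.symm.injective h))
  · rw [gfun_allFalse]
    have hs : SatC m r (finProdFinEquiv.symm l)
        (flipSet (allFalse m r) (blockOf m r (finProdFinEquiv.symm l))) := by
      rw [← Prod.mk.eta (p := finProdFinEquiv.symm l)]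
      exact satC_blockFlip _ _
    rw [satC_implies_gfun _ _ hs]
    simp

lemma bs_le_of_false (x : CoordT m r → Bool) (hx : gfun m r x = false) :
    bs (gfun m r) x ≤ m * r :=
  csSup_le ⟨0, hasBS_zero _ _⟩ (fun b hb => hasBS_le x hx b hb)

lemma bs_allFalse : bs (gfun m r) (allFalse m r) = m * r := by
  apply le_antisymm (bs_le_of_false _ gfun_allFalse)
  exact le_csSup ⟨m * r, fun b hb => hasBS_le _ gfun_allFalse b hb⟩ hasBS_allFalse

/-- the 1-input with maximal certificate complexity -/
def zpt (m r : ℕ) (hm : 0 < m) (hr : 0 < r) : CoordT m r → Bool :=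
  fun p => decide (cubePA m r (⟨0, hm⟩, ⟨0, hr⟩) p = some true)

lemma satC_zpt (hm : 0 < m) (hr : 0 < r) :
    SatC m r (⟨0, hm⟩, ⟨0, hr⟩) (zpt m r hm hr) := satC_pt _

lemma gfun_zpt (hm : 0 < m) (hr : 0 < r) : gfun m r (zpt m r hm hr) = true :=
  satC_implies_gfun _ _ (satC_zpt hm hr)

lemma flipBit_flipBit {I : Type*} [Fintype I] [DecidableEq I] (x : I → Bool) (p : I) :
    flipBit (flipBit x p) p = x := by
  funext q
  unfold flipBit Function.update
  by_cases h : q = p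
  · subst h; simp
  · simp [h]

lemma cert_lower (hm : 0 < m) (hr : 0 < r) (S : Finset (CoordT m r))
    (hS : IsCertOn (gfun m r) S (zpt m r hm hr) true) :
    fixedS m r (⟨0, hm⟩, ⟨0, hr⟩) ⊆ S := by
  intro p hp
  by_contra hpS
  have hfix : cubePA m r (⟨0, hm⟩, ⟨0, hr⟩) p ≠ none := (Finset.mem_filter.mp hp).2
  have hp1 : p.1 = (⟨0, hm⟩ : Fin m) := cubePA_copy _ _ _ _ hfix
  have hagree : agreesOn S (zpt m r hm hr) (flipBit (zpt m r hm hr) p) := by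
    intro q hq
    have hqp : q ≠ p := fun h => hpS (h ▸ hq)
    unfold flipBit
    rw [Function.update_of_ne hqp]
  have hgy : gfun m r (flipBit (zpt m r hm hr) p) = true := hS _ hagree
  obtain ⟨⟨v, j⟩, hsat⟩ := (gfun_true_iff _ _ _).mp hgy
  by_cases hv : v = (⟨0, hm⟩ : Fin m)
  · subst hv
    by_cases hj : j = (⟨0, hr⟩ : Fin r)
    · subst hj
      obtain ⟨bb, hbb⟩ := Option.ne_none_iff_exists'.mp hfix
      have hyp : flipBit (zpt m r hm hr) p p = bb := hsat p bb hbb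
      have hzp : zpt m r hm hr p = bb := satC_zpt hm hr p bb hbb
      have hflip : flipBit (zpt m r hm hr) p p = !(zpt m r hm hr p) := by
        unfold flipBit; rw [Function.update_self]
      rw [hyp, hzp] at hflip
      simp at hflip
    · apply not_two_cubes (⟨0, hm⟩ : Fin m) (⟨0, hr⟩ : Fin r) j (fun h => hj h.symm)
        (flipBit (zpt m r hm hr) p) {p} ∅ ?_ ?_ (by simp)
      · rw [← flipBit_eq_flipSet, flipBit_flipBit]
        exact satC_zpt hm hr
      · rw [flipSet_empty]
        exact hsat
  · have h0 := ((satC_iff v j _).mp hsat).1 j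
    have hne : ((v, j, (0 : Fin 2)) : CoordT m r) ≠ p := by
      intro h
      exact hv (by rw [← hp1, ← h])
    have hyz : flipBit (zpt m r hm hr) p (v, j, 0) = zpt m r hm hr (v, j, 0) := by
      unfold flipBit; rw [Function.update_of_ne hne]
    have hz0 : zpt m r hm hr (v, j, 0) = false := by
      unfold zpt cubePA
      simp [hv]
    rw [hyz, hz0] at h0
    simp at h0

lemma certSize_le_of_true (hr : 0 < r) (x : CoordT m r → Bool) (hx : gfun m r x = true) :
    certSize (gfun m r) x ≤ r + 1 + r / 2 := by
  obtain ⟨⟨u, i⟩, hq⟩ := (gfun_true_iff m r x).mp hx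
  apply Nat.sInf_le
  exact ⟨fixedS m r (u, i), fixedS_card hr u i, by rw [hx]; exact isCertOn_fixedS _ _ hq⟩

lemma certSize_zpt (hm : 0 < m) (hr : 0 < r) :
    certSize (gfun m r) (zpt m r hm hr) = r + 1 + r / 2 := by
  apply le_antisymm (certSize_le_of_true hr _ (gfun_zpt hm hr))
  apply le_csInf
  · refine ⟨r + 1 + r / 2, fixedS m r (⟨0, hm⟩, ⟨0, hr⟩), fixedS_card hr _ _, ?_⟩
    rw [gfun_zpt hm hr]
    exact isCertOn_fixedS _ _ (satC_zpt hm hr)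
  · rintro b ⟨S, hcard, hcert⟩
    rw [gfun_zpt hm hr] at hcert
    have hsub := cert_lower hm hr S hcert
    have := Finset.card_le_card hsub
    rw [fixedS_card hr] at this
    omega

lemma s0_gfun (hm : 0 < m) (hr : 0 < r) : s0 (gfun m r) = m := by
  apply le_antisymm
  · exact Finset.sup_le fun x hx => sens_le hm x (Finset.mem_filter.mp hx).2
  · exact le_trans (sens_xsens_ge hr)
      (Finset.le_sup (Finset.mem_filter.mpr ⟨mem_univ _, gfun_xsens hr⟩))

lemma bs0_gfun : bs0 (gfun m r) = m * r := by
  apply le_antisymm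
  · exact Finset.sup_le fun x hx => bs_le_of_false x (Finset.mem_filter.mp hx).2
  · exact bs_allFalse ▸
      Finset.le_sup (Finset.mem_filter.mpr ⟨mem_univ _, gfun_allFalse⟩)

lemma C1_gfun (hm : 0 < m) (hr : 0 < r) : C1 (gfun m r) = r + 1 + r / 2 := by
  apply le_antisymm
  · exact Finset.sup_le fun x hx => certSize_le_of_true hr x (Finset.mem_filter.mp hx).2
  · exact certSize_zpt hm hr ▸
      Finset.le_sup (Finset.mem_filter.mpr ⟨mem_univ _, gfun_zpt hm hr⟩)

end Construction7

section Transport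
variable {I J : Type*} [Fintype I] [DecidableEq I] [Fintype J] [DecidableEq J]

/-- transport a Boolean function along a relabeling of coordinates -/
def tr (e : I ≃ J) (f : (I → Bool) → Bool) : (J → Bool) → Bool := fun y => f (y ∘ e)

lemma flipBit_comp (e : I ≃ J) (y : J → Bool) (i : I) :
    flipBit y (e i) ∘ e = flipBit (y ∘ e) i := by
  funext i'
  show flipBit y (e i) (e i') = _
  unfold flipBit
  by_cases h : i' = i
  · subst h; rw [Function.update_self, Function.update_self]; rfl
  · rw [Function.update_of_ne (fun hh => h (e.injective hh)), Function.update_of_ne h]; rfl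

lemma flipSet_comp (e : I ≃ J) (y : J → Bool) (B : Finset J) :
    flipSet y B ∘ e = flipSet (y ∘ e) (B.image e.symm) := by
  funext i
  show flipSet y B (e i) = _
  unfold flipSet
  have hmem : e i ∈ B ↔ i ∈ B.image e.symm := by
    simp only [Finset.mem_image]
    constructor
    · intro h; exact ⟨e i, h, e.symm_apply_apply i⟩
    · rintro ⟨j, hj, rfl⟩; rwa [e.apply_symm_apply]
  by_cases h : e i ∈ B
  · rw [if_pos h, if_pos (hmem.mp h)]; rfl
  · rw [if_neg h, if_neg (fun hh => h (hmem.mpr hh))]; rfl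

lemma flipSet_comp' (e : I ≃ J) (y : J → Bool) (B : Finset I) :
    flipSet y (B.image e) ∘ e = flipSet (y ∘ e) B := by
  rw [flipSet_comp]
  congr 1
  rw [Finset.image_image]
  simp

lemma sens_tr (e : I ≃ J) (f : (I → Bool) → Bool) (y : J → Bool) :
    sens (tr e f) y = sens f (y ∘ e) := by
  unfold sens
  have key : ∀ j : J, tr e f (flipBit y j) = f (flipBit (y ∘ e) (e.symm j)) := by
    intro j
    show f (flipBit y j ∘ e) = _
    rw [← flipBit_comp e y (e.symm j), e.apply_symm_apply]
  apply Finset.card_bij' (fun j _ => e.symm j) (fun i _ => e i)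
  · intro j hj
    rw [Finset.mem_filter] at hj ⊢
    refine ⟨mem_univ _, ?_⟩
    rw [← key j]
    exact hj.2
  · intro i hi
    rw [Finset.mem_filter] at hi ⊢
    refine ⟨mem_univ _, ?_⟩
    rw [key (e i), e.symm_apply_apply]
    exact hi.2
  · intro j _; exact e.apply_symm_apply j
  · intro i _; exact e.symm_apply_apply i

lemma s0_tr (e : I ≃ J) (f : (I → Bool) → Bool) : s0 (tr e f) = s0 f := by
  apply le_antisymm
  · apply Finset.sup_le
    intro y hy
    rw [sens_tr]
    exact Finset.le_sup (Finset.mem_filter.mpr ⟨mem_univ _, (Finset.mem_filter.mp hy).2⟩)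
  · apply Finset.sup_le
    intro x hx
    have hxe : (x ∘ e.symm) ∘ e = x := by funext i; simp
    have h1 : sens f x = sens (tr e f) (x ∘ e.symm) := by rw [sens_tr, hxe]
    have h2 : tr e f (x ∘ e.symm) = false := by
      show f ((x ∘ e.symm) ∘ e) = false
      rw [hxe]
      exact (Finset.mem_filter.mp hx).2
    rw [h1]
    exact Finset.le_sup (Finset.mem_filter.mpr ⟨mem_univ _, h2⟩)

lemma hasBS_tr (e : I ≃ J) (f : (I → Bool) → Bool) (y : J → Bool) (b : ℕ) :
    hasBS (tr e f) y b ↔ hasBS f (y ∘ e) b := by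
  constructor
  · rintro ⟨B, hd, hs⟩
    refine ⟨fun l => (B l).image e.symm, fun l l' hne => ?_, fun l => ?_⟩
    · exact (Finset.disjoint_image e.symm.injective).mpr (hd l l' hne)
    · have : f (flipSet (y ∘ e) ((B l).image e.symm)) = tr e f (flipSet y (B l)) := by
        rw [← flipSet_comp]; rfl
      rw [this]
      exact hs l
  · rintro ⟨B, hd, hs⟩
    refine ⟨fun l => (B l).image e, fun l l' hne => ?_, fun l => ?_⟩
    · exact (Finset.disjoint_image e.injective).mpr (hd l l' hne)
    · have : tr e f (flipSet y ((B l).image e)) = f (flipSet (y ∘ e) (B l)) := by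
        show f (flipSet y ((B l).image e) ∘ e) = _
        rw [flipSet_comp']
      rw [this]
      exact hs l

lemma bs_tr (e : I ≃ J) (f : (I → Bool) → Bool) (y : J → Bool) :
    bs (tr e f) y = bs f (y ∘ e) := by
  unfold bs
  congr 1
  ext b
  exact hasBS_tr e f y b

lemma bs0_tr (e : I ≃ J) (f : (I → Bool) → Bool) : bs0 (tr e f) = bs0 f := by
  apply le_antisymm
  · apply Finset.sup_le
    intro y hy
    rw [bs_tr]
    exact Finset.le_sup (Finset.mem_filter.mpr ⟨mem_univ _, (Finset.mem_filter.mp hy).2⟩)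
  · apply Finset.sup_le
    intro x hx
    have hxe : (x ∘ e.symm) ∘ e = x := by funext i; simp
    have h1 : bs f x = bs (tr e f) (x ∘ e.symm) := by rw [bs_tr, hxe]
    have h2 : tr e f (x ∘ e.symm) = false := by
      show f ((x ∘ e.symm) ∘ e) = false
      rw [hxe]
      exact (Finset.mem_filter.mp hx).2
    rw [h1]
    exact Finset.le_sup (Finset.mem_filter.mpr ⟨mem_univ _, h2⟩)

lemma certSize_tr (e : I ≃ J) (f : (I → Bool) → Bool) (y : J → Bool) :
    certSize (tr e f) y = certSize f (y ∘ e) := by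
  unfold certSize
  congr 1
  ext b
  constructor
  · rintro ⟨S, rfl, hcert⟩
    refine ⟨S.image e.symm, Finset.card_image_of_injective _ e.symm.injective, ?_⟩
    intro x hagree
    have hx : f x = tr e f (x ∘ e.symm) := by
      show _ = f ((x ∘ e.symm) ∘ e)
      congr 1
      funext i; simp
    rw [hx]
    apply hcert
    intro j hj
    have := hagree (e.symm j) (Finset.mem_image_of_mem _ hj)
    show x (e.symm j) = y j
    rw [this]
    show y (e (e.symm j)) = y j
    rw [e.apply_symm_apply]
  · rintro ⟨S, rfl, hcert⟩
    refine ⟨S.image e, Finset.card_image_of_injective _ e.injective, ?_⟩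
    intro x hagree
    show f (x ∘ e) = tr e f y
    apply hcert
    intro i hi
    have := hagree (e i) (Finset.mem_image_of_mem _ hi)
    exact this
  
lemma C1_tr (e : I ≃ J) (f : (I → Bool) → Bool) : C1 (tr e f) = C1 f := by
  apply le_antisymm
  · apply Finset.sup_le
    intro y hy
    rw [certSize_tr]
    exact Finset.le_sup (Finset.mem_filter.mpr ⟨mem_univ _, (Finset.mem_filter.mp hy).2⟩)
  · apply Finset.sup_le
    intro x hx
    have hxe : (x ∘ e.symm) ∘ e = x := by funext i; simp
    have h1 : certSize f x = certSize (tr e f) (x ∘ e.symm) := by rw [certSize_tr, hxe]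
    have h2 : tr e f (x ∘ e.symm) = true := by
      show f ((x ∘ e.symm) ∘ e) = true
      rw [hxe]
      exact (Finset.mem_filter.mp hx).2
    rw [h1]
    exact Finset.le_sup (Finset.mem_filter.mpr ⟨mem_univ _, h2⟩)

end Transport

/-- For all `m ≥ 1` and `k` divisible by `m` (with `k ≥ m`), there is a
Boolean function `g` with `s_0(g) = m`, `bs_0(g) = k` and `C_1(g) = ⌊3(k/m)/2⌋ + 1`. -/
theorem stmt_6 (m k : ℕ) (hm : 1 ≤ m) (hmk : m ≤ k) (hdvd : m ∣ k) :
    ∃ (n : ℕ) (g : (Fin n → Bool) → Bool),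
      s0 g = m ∧ bs0 g = k ∧ C1 g = 3 * (k / m) / 2 + 1 := by
  have hm0 : 0 < m := hm
  have hr : 0 < k / m := Nat.div_pos hmk hm0
  have hk : m * (k / m) = k := Nat.mul_div_cancel' hdvd
  let e : CoordT m (k / m) ≃ Fin (m * (k / m * 2)) :=
    (Equiv.prodCongr (Equiv.refl (Fin m)) finProdFinEquiv).trans finProdFinEquiv
  refine ⟨m * (k / m * 2), tr e (gfun m (k / m)), ?_, ?_, ?_⟩
  · rw [s0_tr]
    exact s0_gfun hm0 hr
  · rw [bs0_tr, bs0_gfun, hk]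
  · rw [C1_tr, C1_gfun hm0 hr]
    omega
end

section
/- Let w : complete graph on m vertices → ℕ be edge weights with the property that for every subset A of the vertices of size s and every vertex v ∉ A, if A has minimum total internal weight among all s-subsets then the total weight of edges from v to A is at least 3. If additionally m > s implies the inductive bound holds for all smaller orders, then the total weight of all edges is at least (3/2)m²/s − (3/2)m. (Induction step of the weight lemma.) -/
open Finset

lemma gweight_nonneg' {V : Type*} [DecidableEq V] (w : V → V → ℕ) (A : Finset V) :
    0 ≤ gweight w A := by
  unfold gweight; positivity

lemma gweight_split' {V : Type*} [Fintype V] [DecidableEq V] (w : V → V → ℕ)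
    (hsymm : ∀ u v, w u v = w v u) (A : Finset V) :
    gweight w (univ : Finset V) =
      gweight w A + gweight w Aᶜ + ∑ v ∈ Aᶜ, ∑ u ∈ A, (w v u : ℚ) := by
  unfold gweight
  have hset : (univ : Finset V).offDiag =
      (A.offDiag ∪ Aᶜ.offDiag) ∪ (A ×ˢ Aᶜ ∪ Aᶜ ×ˢ A) := by
    ext ⟨u, v⟩
    simp only [Finset.mem_offDiag, Finset.mem_union, Finset.mem_product, Finset.mem_compl,
      Finset.mem_univ, true_and]
    by_cases h : u = v
    · subst h; tauto
    · by_cases hu : u ∈ A <;> by_cases hv : v ∈ A <;> simp [hu, hv, h]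
  have d1 : Disjoint (A.offDiag ∪ Aᶜ.offDiag) (A ×ˢ Aᶜ ∪ Aᶜ ×ˢ A) := by
    simp only [Finset.disjoint_left]
    rintro ⟨u, v⟩ h h'
    simp only [Finset.mem_union, Finset.mem_offDiag, Finset.mem_product,
      Finset.mem_compl] at h h'
    tauto
  have d2 : Disjoint A.offDiag Aᶜ.offDiag := by
    simp only [Finset.disjoint_left]
    rintro ⟨u, v⟩ h h'
    simp only [Finset.mem_offDiag, Finset.mem_compl] at h h'
    tauto
  have d3 : Disjoint (A ×ˢ Aᶜ) (Aᶜ ×ˢ A) := by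
    simp only [Finset.disjoint_left]
    rintro ⟨u, v⟩ h h'
    simp only [Finset.mem_product, Finset.mem_compl] at h h'
    tauto
  rw [hset, Finset.sum_union d1, Finset.sum_union d2, Finset.sum_union d3,
    Finset.sum_product, Finset.sum_product]
  have hsym2 : ∑ u ∈ A, ∑ v ∈ Aᶜ, (w u v : ℚ) = ∑ v ∈ Aᶜ, ∑ u ∈ A, (w v u : ℚ) := by
    rw [Finset.sum_comm]
    refine Finset.sum_congr rfl fun v _ => Finset.sum_congr rfl fun u _ => ?_
    rw [hsymm]
  rw [hsym2]; ring

/-- induction step of the weight lemma: if every vertex outside a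
minimum-weight `s`-subset has cut weight at least 3 to it, and the bound holds for all
induced subgraphs of smaller order, then the total weight of the whole graph on `m`
vertices is at least `(3/2)m²/s − (3/2)m`. -/
theorem stmt_12 {m : ℕ} (s : ℕ) (hs : 1 ≤ s) (w : Fin m → Fin m → ℕ)
    (hsymm : ∀ u v, w u v = w v u)
    (hcut : ∀ A : Finset (Fin m), A.card = s →
      (∀ A' : Finset (Fin m), A'.card = s → gweight w A ≤ gweight w A') →
      ∀ v ∉ A, 3 ≤ ∑ u ∈ A, w v u)
    (hind : ∀ A : Finset (Fin m), A.card < m →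
      gweight w A ≥ 3 / 2 * (A.card : ℚ) ^ 2 / (s : ℚ) - 3 / 2 * (A.card : ℚ)) :
    gweight w (Finset.univ : Finset (Fin m)) ≥
      3 / 2 * (m : ℚ) ^ 2 / (s : ℚ) - 3 / 2 * (m : ℚ) := by
  have hs0 : (0 : ℚ) < s := by exact_mod_cast hs
  rcases le_or_gt m s with hms | hms
  · have h0 := gweight_nonneg' w (univ : Finset (Fin m))
    have hcast : (m : ℚ) ≤ s := by exact_mod_cast hms
    have hmn : (0 : ℚ) ≤ m := Nat.cast_nonneg m
    have hle : 3 / 2 * (m : ℚ) ^ 2 / s - 3 / 2 * m ≤ 0 := by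
      rw [sub_nonpos, div_le_iff₀ hs0]
      nlinarith
    linarith
  · -- choose a minimum-weight s-subset
    have hne : ((univ : Finset (Fin m)).powersetCard s).Nonempty := by
      apply Finset.powersetCard_nonempty.mpr
      simpa using hms.le
    obtain ⟨A, hAmem, hAmin⟩ := Finset.exists_min_image _ (gweight w) hne
    have hAcard : A.card = s := (Finset.mem_powersetCard.mp hAmem).2
    have hmin : ∀ A' : Finset (Fin m), A'.card = s → gweight w A ≤ gweight w A' := by
      intro A' hA'
      exact hAmin A' (Finset.mem_powersetCard.mpr ⟨Finset.subset_univ _, hA'⟩)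
    have hcut' := hcut A hAcard hmin
    have hcompl_card : Aᶜ.card = m - s := by
      rw [Finset.card_compl, hAcard, Fintype.card_fin]
    have hlt : Aᶜ.card < m := by
      rw [hcompl_card]
      exact Nat.sub_lt (lt_of_le_of_lt (Nat.zero_le s) hms) hs
    have hind' := hind Aᶜ hlt
    have hcutsum : (3 : ℚ) * (Aᶜ.card : ℚ) ≤ ∑ v ∈ Aᶜ, ∑ u ∈ A, (w v u : ℚ) := by
      have : ∀ v ∈ Aᶜ, (3 : ℚ) ≤ ∑ u ∈ A, (w v u : ℚ) := by
        intro v hv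
        have := hcut' v (Finset.mem_compl.mp hv)
        exact_mod_cast this
      calc (3 : ℚ) * (Aᶜ.card : ℚ) = ∑ _v ∈ Aᶜ, (3 : ℚ) := by
            rw [Finset.sum_const, nsmul_eq_mul, mul_comm]
        _ ≤ _ := Finset.sum_le_sum this
    have hsplit := gweight_split' w hsymm A
    have h0 := gweight_nonneg' w A
    have hc : ((Aᶜ.card : ℕ) : ℚ) = (m : ℚ) - (s : ℚ) := by
      rw [hcompl_card]
      push_cast [Nat.cast_sub hms.le]
      ring
    rw [hc] at hind' hcutsum
    have key : 3 / 2 * (m : ℚ) ^ 2 / s - 3 / 2 * m =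
        3 / 2 * ((m : ℚ) - s) ^ 2 / s - 3 / 2 * ((m : ℚ) - s) + 3 * ((m : ℚ) - s) := by
      field_simp
      ring
    rw [ge_iff_le, hsplit, key]
    linarith
end
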